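/- Consider an N-level system where, at level ℓ, d/dt f̄^{(ℓ)} = Var^{(ℓ)} + E^{(ℓ)} with E^{(ℓ)} ≥ −γ_ℓ Var^{(ℓ)} − Σ_{ℓ'≠ℓ} β_{ℓℓ'} Var^{(ℓ')}, where γ_ℓ ∈ [0,1) and β_{ℓℓ'} ≥ 0. Define the gain matrix Γ with Γ_{ℓℓ} = 0 and Γ_{ℓℓ'} = β_{ℓℓ'}/(1 − γ_ℓ) for ℓ' ≠ ℓ, and suppose ρ(Γ) < 1. Then with weights α_ℓ = v_ℓ/(1 − γ_ℓ) where v = (I − Γᵀ)^{−1}𝟙, the function Ψ = Σ_ℓ α_ℓ f̄^{(ℓ)} satisfies dΨ/dt ≥ Σ_ℓ Var^{(ℓ)} ≥ 0. -/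

import Mathlib

open Finset Matrix

/-! The weights make the cross-level losses cancel: `α` solves the adjoint balance equation
`α ℓ * (1 - γ ℓ) = 1 + ∑ ℓ', α ℓ' * β ℓ' ℓ`, so summing the lower bounds for
`α ℓ * (Var ℓ + E ℓ)` leaves exactly `∑ ℓ, Var ℓ`, provided `α ≥ 0`, i.e. `(1 - Γᵀ)⁻¹ 𝟙 ≥ 0`.
As `spectralRadius ℝ` only sees real eigenvalues, this positivity is not read off a Neumann
series but proved by continuation: `1 - s • Γᵀ` stays invertible for `s ∈ [0, 1]`, and the least
entry of `w s = (1 - s • Γᵀ)⁻¹ 𝟙` starts at `1` and, since `w s = 𝟙 + s • Γᵀ w s` with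
`Γᵀ ≥ 0`, can never enter `[0, 1)`. -/

theorem isUnit_one_sub_smul_of_spectralRadius_lt_one {A : Type*} [Ring A] [Algebra ℝ A]
    {a : A} (ha : spectralRadius ℝ a < 1) {s : ℝ} (hs : |s| ≤ 1) : IsUnit (1 - s • a) := by
  rcases eq_or_ne s 0 with rfl | hs0
  · simp
  have hres : s⁻¹ ∈ resolventSet ℝ a := by
    refine spectrum.mem_resolventSet_of_spectralRadius_lt (ha.trans_le ?_)
    have : 1 ≤ ‖s⁻¹‖ := by
      rw [norm_inv, Real.norm_eq_abs]
      exact (one_le_inv₀ (abs_pos.2 hs0)).2 hs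
    exact_mod_cast this
  have : 1 - s • a = algebraMap ℝ A s * (algebraMap ℝ A s⁻¹ - a) := by
    rw [mul_sub, ← map_mul, mul_inv_cancel₀ hs0, map_one, Algebra.smul_def]
  rw [this]
  exact ((isUnit_iff_ne_zero.2 hs0).map _).mul (spectrum.mem_resolventSet_iff.1 hres)

theorem IsPreconnected.le_of_forall_le_imp_le {α : Type*} [TopologicalSpace α] {S : Set α}
    (hS : IsPreconnected S) {f : α → ℝ} (hf : ContinuousOn f S) {a b : ℝ} (hab : a < b)
    {x₀ : α} (hx₀ : x₀ ∈ S) (hb : b ≤ f x₀) (hgap : ∀ x ∈ S, a ≤ f x → b ≤ f x) :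
    ∀ x ∈ S, b ≤ f x := by
  intro x hx
  by_contra! hfx
  have hfxa : f x < a := lt_of_not_ge fun h => (hgap x hx h).not_gt hfx
  obtain ⟨y, hy, hfy⟩ := hS.intermediate_value hx hx₀ hf ⟨hfxa.le, hab.le.trans hb⟩
  exact (hgap y hy hfy.ge).not_gt (hfy ▸ hab)

namespace Matrix

variable {n : Type*} [Fintype n] [DecidableEq n]

theorem spectrum_transpose {R : Type*} [CommRing R] (A : Matrix n n R) :
    spectrum R Aᵀ = spectrum R A := by
  ext r
  rw [spectrum.mem_iff, spectrum.mem_iff, ← isUnit_transpose, transpose_sub,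
    algebraMap_eq_diagonal, diagonal_transpose, transpose_transpose]

theorem inv_one_sub_mulVec_eq {B : Matrix n n ℝ} (hB : IsUnit (1 - B)) (b : n → ℝ) :
    (1 - B)⁻¹ *ᵥ b = b + B *ᵥ ((1 - B)⁻¹ *ᵥ b) := by
  have h : (1 - B) *ᵥ ((1 - B)⁻¹ *ᵥ b) = b := by
    rw [mulVec_mulVec, mul_nonsing_inv _ ((isUnit_iff_isUnit_det _).1 hB), one_mulVec]
  rw [sub_mulVec, one_mulVec] at h
  exact sub_eq_iff_eq_add.1 h

theorem continuousOn_inv_one_sub_smul_mulVec {B : Matrix n n ℝ} {S : Set ℝ}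
    (hS : ∀ s ∈ S, IsUnit (1 - s • B)) (b : n → ℝ) :
    ContinuousOn (fun s : ℝ => (1 - s • B)⁻¹ *ᵥ b) S := by
  have hpath : Continuous fun s : ℝ => 1 - s • B :=
    continuous_const.sub (continuous_id.smul continuous_const)
  refine fun s hs => ContinuousAt.continuousWithinAt ?_
  refine (continuous_id.matrix_mulVec continuous_const).continuousAt.comp
    ((continuousAt_matrix_inv _ ?_).comp hpath.continuousAt)
  rw [Ring.inverse_eq_inv']
  exact continuousAt_inv₀ ((isUnit_iff_isUnit_det _).1 (hS s hs)).ne_zero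

theorem one_le_inv_one_sub_mulVec_one {B : Matrix n n ℝ} (hB : ∀ i j, 0 ≤ B i j)
    (hunit : ∀ s ∈ Set.Icc (0 : ℝ) 1, IsUnit (1 - s • B)) (i : n) :
    1 ≤ ((1 - B)⁻¹ *ᵥ fun _ => (1 : ℝ)) i := by
  set w : ℝ → n → ℝ := fun s => (1 - s • B)⁻¹ *ᵥ fun _ => 1
  have hne : (univ : Finset n).Nonempty := ⟨i, mem_univ i⟩
  have hgap : ∀ s ∈ Set.Icc (0 : ℝ) 1,
      0 ≤ univ.inf' hne (w s) → 1 ≤ univ.inf' hne (w s) := by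
    intro s hs hw
    refine (le_inf'_iff _ _).2 fun j _ => ?_
    have hBw : 0 ≤ ((s • B) *ᵥ w s) j := by
      refine sum_nonneg fun k _ => mul_nonneg ?_ (hw.trans (inf'_le _ (mem_univ k)))
      exact smul_nonneg hs.1 (hB j k)
    rw [show w s = _ from inv_one_sub_mulVec_eq (hunit s hs) _]
    exact le_add_of_nonneg_right hBw
  have hmin := isPreconnected_Icc.le_of_forall_le_imp_le
    (ContinuousOn.finset_inf'_apply hne fun j _ =>
      (continuous_apply j).comp_continuousOn (continuousOn_inv_one_sub_smul_mulVec hunit _))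
    zero_lt_one (Set.left_mem_Icc.2 zero_le_one) (by simp) hgap 1
    (Set.right_mem_Icc.2 zero_le_one)
  simpa [w] using hmin.trans (inf'_le _ (mem_univ i))

end Matrix

theorem sum_le_sum_mul_of_balance {ι : Type*} [Fintype ι] {x e γ α : ι → ℝ}
    {β : ι → ι → ℝ}
    (hα : ∀ ℓ, 0 ≤ α ℓ) (hbal : ∀ ℓ, α ℓ * (1 - γ ℓ) = 1 + ∑ ℓ', α ℓ' * β ℓ' ℓ)
    (he : ∀ ℓ, -(γ ℓ * x ℓ) - ∑ ℓ', β ℓ ℓ' * x ℓ' ≤ e ℓ) :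
    ∑ ℓ, x ℓ ≤ ∑ ℓ, α ℓ * (x ℓ + e ℓ) :=
  calc ∑ ℓ, x ℓ
      = ∑ ℓ, α ℓ * (1 - γ ℓ) * x ℓ - ∑ ℓ, ∑ ℓ', α ℓ * β ℓ ℓ' * x ℓ' := by
        simp only [hbal, add_mul, one_mul, sum_add_distrib, sum_mul, mul_assoc]
        rw [sum_comm (γ := ι) (f := fun ℓ ℓ' => α ℓ' * (β ℓ' ℓ * x ℓ))]
        ring
    _ = ∑ ℓ, α ℓ * ((1 - γ ℓ) * x ℓ - ∑ ℓ', β ℓ ℓ' * x ℓ') := by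
        rw [← sum_sub_distrib]
        exact sum_congr rfl fun ℓ _ => by
          rw [mul_sub (α ℓ) ((1 - γ ℓ) * x ℓ), mul_sum]
          simp only [mul_assoc]
    _ ≤ ∑ ℓ, α ℓ * (x ℓ + e ℓ) :=
        sum_le_sum fun ℓ _ => mul_le_mul_of_nonneg_left (by linarith [he ℓ]) (hα ℓ)

theorem g1_nlevel_lyapunov_general (N : ℕ) (fbar Var E : Fin N → ℝ → ℝ)
    (γ : Fin N → ℝ) (β : Fin N → Fin N → ℝ)
    (hγ : ∀ ℓ, γ ℓ ∈ Set.Ico (0 : ℝ) 1)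
    (hβ : ∀ ℓ ℓ', 0 ≤ β ℓ ℓ')
    (hVar : ∀ ℓ t, 0 ≤ Var ℓ t)
    (hderiv : ∀ ℓ t, HasDerivAt (fbar ℓ) (Var ℓ t + E ℓ t) t)
    (hE : ∀ ℓ t, -(γ ℓ * Var ℓ t) - ∑ ℓ', β ℓ ℓ' * Var ℓ' t ≤ E ℓ t)
    (Γm : Matrix (Fin N) (Fin N) ℝ)
    (hΓm : Γm = Matrix.of fun ℓ ℓ' => β ℓ ℓ' / (1 - γ ℓ))
    (hρ : spectralRadius ℝ Γm < 1)
    (v : Fin N → ℝ) (hv : v = (1 - Γmᵀ)⁻¹ *ᵥ fun _ => (1 : ℝ))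
    (α : Fin N → ℝ) (hα : ∀ ℓ, α ℓ = v ℓ / (1 - γ ℓ)) :
    ∀ t : ℝ,
      HasDerivAt (fun s => ∑ ℓ, α ℓ * fbar ℓ s)
        (∑ ℓ, α ℓ * (Var ℓ t + E ℓ t)) t ∧
      (∑ ℓ, Var ℓ t) ≤ ∑ ℓ, α ℓ * (Var ℓ t + E ℓ t) ∧
      0 ≤ ∑ ℓ, Var ℓ t := by
  have hγ₁ : ∀ ℓ, 0 < 1 - γ ℓ := fun ℓ => sub_pos.2 (hγ ℓ).2
  have hρT : spectralRadius ℝ Γmᵀ < 1 := by rwa [spectralRadius, spectrum_transpose]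
  have hunit : ∀ s ∈ Set.Icc (0 : ℝ) 1, IsUnit (1 - s • Γmᵀ) := fun s hs =>
    isUnit_one_sub_smul_of_spectralRadius_lt_one hρT (abs_le.2 ⟨by linarith [hs.1], hs.2⟩)
  have hv_one : ∀ ℓ, 1 ≤ v ℓ := hv ▸ one_le_inv_one_sub_mulVec_one
    (fun i j => hΓm ▸ div_nonneg (hβ j i) (hγ₁ j).le) hunit
  have hbal : ∀ ℓ, α ℓ * (1 - γ ℓ) = 1 + ∑ ℓ', α ℓ' * β ℓ' ℓ := by
    intro ℓ
    have hfix : v = (fun _ => 1) + Γmᵀ *ᵥ v :=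
      hv ▸ inv_one_sub_mulVec_eq (by simpa using hunit 1 (Set.right_mem_Icc.2 zero_le_one)) _
    rw [hα, div_mul_cancel₀ _ (hγ₁ ℓ).ne', congrFun hfix ℓ]
    simp only [Pi.add_apply, mulVec, dotProduct, transpose_apply, hΓm, of_apply, hα]
    exact congrArg _ (sum_congr rfl fun i _ => by ring)
  intro t
  exact ⟨HasDerivAt.fun_sum fun ℓ _ => (hderiv ℓ t).const_mul (α ℓ),
    sum_le_sum_mul_of_balance
      (fun ℓ => hα ℓ ▸ div_nonneg (zero_le_one.trans (hv_one ℓ)) (hγ₁ ℓ).le) hbal (hE · t),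
    sum_nonneg fun ℓ _ => hVar ℓ t⟩

/-- G1 (N-level Lyapunov): under the level-wise Price decomposition with externality
bounds and the small-gain condition ρ(Γ) < 1, the weighted potential
Ψ = Σ_ℓ α_ℓ f̄^{(ℓ)} with α_ℓ = v_ℓ/(1−γ_ℓ), v = (I−Γᵀ)⁻¹𝟙, satisfies
dΨ/dt ≥ Σ_ℓ Var^{(ℓ)} ≥ 0. -/
theorem g1_nlevel_lyapunov (N : ℕ) (fbar Var E : Fin N → ℝ → ℝ)
    (γ : Fin N → ℝ) (β : Fin N → Fin N → ℝ)
    (hγ : ∀ ℓ, γ ℓ ∈ Set.Ico (0 : ℝ) 1)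
    (hβ : ∀ ℓ ℓ', 0 ≤ β ℓ ℓ') (hβdiag : ∀ ℓ, β ℓ ℓ = 0)
    (hVar : ∀ ℓ t, 0 ≤ Var ℓ t)
    (hderiv : ∀ ℓ t, HasDerivAt (fbar ℓ) (Var ℓ t + E ℓ t) t)
    (hE : ∀ ℓ t, -(γ ℓ * Var ℓ t) - ∑ ℓ', β ℓ ℓ' * Var ℓ' t ≤ E ℓ t)
    (Γm : Matrix (Fin N) (Fin N) ℝ)
    (hΓm : Γm = Matrix.of fun ℓ ℓ' => β ℓ ℓ' / (1 - γ ℓ))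
    (hρ : spectralRadius ℝ Γm < 1)
    (v : Fin N → ℝ) (hv : v = (1 - Γmᵀ)⁻¹ *ᵥ fun _ => (1 : ℝ))
    (α : Fin N → ℝ) (hα : ∀ ℓ, α ℓ = v ℓ / (1 - γ ℓ)) :
    ∀ t : ℝ,
      HasDerivAt (fun s => ∑ ℓ, α ℓ * fbar ℓ s)
        (∑ ℓ, α ℓ * (Var ℓ t + E ℓ t)) t ∧
      (∑ ℓ, Var ℓ t) ≤ ∑ ℓ, α ℓ * (Var ℓ t + E ℓ t) ∧
      0 ≤ ∑ ℓ, Var ℓ t :=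
  g1_nlevel_lyapunov_general N fbar Var E γ β hγ hβ hVar hderiv hE Γm hΓm hρ v hv α hα
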